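/- There exists a universal constant C ∈ (0, ∞) such that for every p ∈ [2, ∞), every s ∈ (0, ∞) with e^s > √p, every n ∈ ℕ, and every h : {−1,1}^n → ℝ, ‖e^{−sΔ_{[n]}}(h − Rad_0 h)‖_p ≤ C·√p/(e^s − √p)·‖h‖_p, i.e. the operator norm of e^{−sΔ_{[n]}}(I − Rad_0) on L_p({−1,1}^n) is at most C√p/(e^s − √p). -/

import Mathlib

open Finset

/-- The normalized `L_p` norm of a function on the discrete hypercube `{-1,1}^n`
(coordinates encoded by `Bool`). -/
noncomputable def pnorm {n : ℕ} (p : ℝ) (h : (Fin n → Bool) → ℝ) : ℝ :=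
  ((∑ ε : Fin n → Bool, |h ε| ^ p) / 2 ^ n) ^ (1 / p)

/-- The Walsh function `W_A(ε) = Π_{j ∈ A} ε_j`. -/
def walsh {n : ℕ} (A : Finset (Fin n)) (ε : Fin n → Bool) : ℝ :=
  ∏ j ∈ A, (if ε j then (1 : ℝ) else -1)

/-- The Fourier–Walsh coefficient `ĥ(A) = 2^{-n} Σ_ε h(ε) W_A(ε)`. -/
noncomputable def fourierCoef {n : ℕ} (h : (Fin n → Bool) → ℝ) (A : Finset (Fin n)) : ℝ :=
  (∑ ε : Fin n → Bool, h ε * walsh A ε) / 2 ^ n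

/-- `Δ_S^α h = Σ_{A ∩ S ≠ ∅} |A ∩ S|^α ĥ(A) W_A`. -/
noncomputable def deltaPow {n : ℕ} (S : Finset (Fin n)) (α : ℝ) (h : (Fin n → Bool) → ℝ) :
    (Fin n → Bool) → ℝ :=
  fun ε => ∑ A : Finset (Fin n),
    if (A ∩ S).Nonempty then ((A ∩ S).card : ℝ) ^ α * fourierCoef h A * walsh A ε else 0

/-- `E_S h`: averaging of `h` over the coordinates in `S`. -/
noncomputable def condAvg {n : ℕ} (S : Finset (Fin n)) (h : (Fin n → Bool) → ℝ) :
    (Fin n → Bool) → ℝ :=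
  fun ε => (∑ δ : Fin n → Bool, h (fun j => if j ∈ S then δ j else ε j)) / 2 ^ n

/-- The heat semigroup of the hypercube Laplacian: `e^{-sΔ_{[n]}} h = Σ_A e^{-s|A|} ĥ(A) W_A`. -/
noncomputable def heatSemigroup {n : ℕ} (s : ℝ) (h : (Fin n → Bool) → ℝ) :
    (Fin n → Bool) → ℝ :=
  fun ε => ∑ A : Finset (Fin n), Real.exp (-(s * A.card)) * fourierCoef h A * walsh A ε

/-!
Write `T_ρ f = ∑_A ρ^|A| f̂(A) W_A` for the noise operator, so that `e^{-sΔ} = T_{e^{-s}}`.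
Bonami–Gross hypercontractivity `‖T_ρ f‖_q ≤ ‖f‖_2` for `(q - 1) ρ² ≤ 1` follows by induction on
the dimension from the two-point inequality `(|a+b|^q + |a-b|^q)/2 ≤ (a² + (q-1) b²)^{q/2}`.
Factor `e^{-sΔ} = T_ρ ∘ T_r` with `ρ = (p-1)^{-1/2}` and `r = √(p-1) e^{-s} ≤ 1`. On functions of
mean zero `T_r` shrinks the `L_2` norm by the factor `r` (Parseval), hence
`‖e^{-sΔ}(h - Rad_0 h)‖_p ≤ r ‖h‖_2 ≤ √p e^{-s} ‖h‖_p ≤ √p/(e^s - √p) ‖h‖_p`, and `C = 1` works.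
-/

lemma monotoneOn_Icc_of_hasDerivAt_nonneg {f f' : ℝ → ℝ} {a b : ℝ}
    (hf : ContinuousOn f (Set.Icc a b)) (hf' : ∀ x ∈ Set.Ioo a b, HasDerivAt f (f' x) x)
    (hf'₀ : ∀ x ∈ Set.Ioo a b, 0 ≤ f' x) : MonotoneOn f (Set.Icc a b) :=
  monotoneOn_of_hasDerivWithinAt_nonneg (convex_Icc a b) hf
    (by simpa only [interior_Icc] using fun x hx => (hf' x hx).hasDerivWithinAt)
    (by simpa only [interior_Icc] using hf'₀)

lemma two_le_one_add_rpow_add_one_sub_rpow {t c : ℝ} (ht : |t| < 1) (hc : c ≤ 0) :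
    2 ≤ (1 + t) ^ c + (1 - t) ^ c := by
  obtain ⟨ht₁, ht₂⟩ := abs_lt.1 ht
  have hplus : 0 < 1 + t := by linarith
  have hminus : 0 < 1 - t := by linarith
  have hprod : 1 ≤ (1 + t) ^ c * (1 - t) ^ c := by
    rw [← Real.mul_rpow hplus.le hminus.le]
    exact Real.one_le_rpow_of_pos_of_le_one_of_nonpos (mul_pos hplus hminus)
      (by nlinarith [sq_nonneg t]) hc
  nlinarith [sq_nonneg ((1 + t) ^ c - (1 - t) ^ c), Real.rpow_pos_of_pos hplus c,
    Real.rpow_pos_of_pos hminus c]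

lemma hasDerivAt_one_add_rpow {r x : ℝ} (hx : -1 < x) :
    HasDerivAt (fun t : ℝ => (1 + t) ^ r) (r * (1 + x) ^ (r - 1)) x := by
  simpa using ((hasDerivAt_id' x).const_add 1).rpow_const (p := r) (Or.inl (by linarith))

lemma hasDerivAt_one_sub_rpow {r x : ℝ} (hx : x < 1) :
    HasDerivAt (fun t : ℝ => (1 - t) ^ r) (-(r * (1 - x) ^ (r - 1))) x := by
  simpa using ((hasDerivAt_id' x).const_sub 1).rpow_const (p := r) (Or.inl (by linarith))

/-- Obtained by integrating twice the bound `(1+t)^(p-2) + (1-t)^(p-2) ≥ 2`. -/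
lemma one_add_mul_sq_le_avg_rpow {p t : ℝ} (hp₁ : 1 ≤ p) (hp₂ : p ≤ 2) (ht : t ∈ Set.Icc 0 1) :
    1 + p * (p - 1) / 2 * t ^ 2 ≤ ((1 + t) ^ p + (1 - t) ^ p) / 2 := by
  have hψ : MonotoneOn (fun t : ℝ => (1 + t) ^ (p - 1) - (1 - t) ^ (p - 1) - 2 * (p - 1) * t)
      (Set.Icc 0 1) := by
    have : 0 ≤ p - 1 := by linarith
    refine monotoneOn_Icc_of_hasDerivAt_nonneg (by fun_prop (disch := intros; right; assumption))
      (fun x hx => ((hasDerivAt_one_add_rpow (by linarith [hx.1])).sub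
          (hasDerivAt_one_sub_rpow hx.2)).sub ((hasDerivAt_id' x).const_mul _)) (fun x hx => ?_)
    have := two_le_one_add_rpow_add_one_sub_rpow (abs_lt.2 ⟨by linarith [hx.1], hx.2⟩)
      (show p - 1 - 1 ≤ 0 by linarith)
    nlinarith
  have hφ : MonotoneOn (fun t : ℝ => ((1 + t) ^ p + (1 - t) ^ p) / 2 - p * (p - 1) / 2 * t ^ 2)
      (Set.Icc 0 1) := by
    have : 0 ≤ p := by linarith
    refine monotoneOn_Icc_of_hasDerivAt_nonneg
      (f' := fun x => p / 2 * ((1 + x) ^ (p - 1) - (1 - x) ^ (p - 1) - 2 * (p - 1) * x))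
      (by fun_prop (disch := intros; right; assumption)) (fun x hx => ?_) (fun x hx => ?_)
    · exact ((((hasDerivAt_one_add_rpow (r := p) (by linarith [hx.1])).add
        (hasDerivAt_one_sub_rpow hx.2)).div_const 2).sub
        ((hasDerivAt_pow 2 x).const_mul (p * (p - 1) / 2))).congr_deriv (by push_cast; ring)
    · have := hψ (Set.left_mem_Icc.2 zero_le_one) (Set.Ioo_subset_Icc_self hx) hx.1.le
      norm_num at this
      nlinarith
  have := hφ (Set.left_mem_Icc.2 zero_le_one) ht ht.1
  norm_num at this
  linarith

lemma one_add_mul_sq_le_rpow_two_div {p t : ℝ} (hp₁ : 1 ≤ p) (hp₂ : p ≤ 2) (ht : |t| ≤ 1) :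
    1 + (p - 1) * t ^ 2 ≤ ((|1 + t| ^ p + |1 - t| ^ p) / 2) ^ (2 / p) := by
  have key : ∀ u ∈ Set.Icc (0 : ℝ) 1,
      1 + (p - 1) * u ^ 2 ≤ (((1 + u) ^ p + (1 - u) ^ p) / 2) ^ (2 / p) := by
    intro u hu
    have hbase : 0 ≤ 1 + (p - 1) * u ^ 2 := by nlinarith
    have bernoulli : (1 + (p - 1) * u ^ 2) ^ (p / 2) ≤ 1 + p / 2 * ((p - 1) * u ^ 2) :=
      rpow_one_add_le_one_add_mul_self (by nlinarith) (by linarith) (by linarith)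
    calc 1 + (p - 1) * u ^ 2 = ((1 + (p - 1) * u ^ 2) ^ (p / 2)) ^ (2 / p) := by
          rw [← Real.rpow_mul hbase, show p / 2 * (2 / p) = 1 by field_simp, Real.rpow_one]
      _ ≤ (((1 + u) ^ p + (1 - u) ^ p) / 2) ^ (2 / p) := by
          gcongr
          linarith [one_add_mul_sq_le_avg_rpow hp₁ hp₂ hu]
  rcases le_total 0 t with h | h
  · rw [abs_of_nonneg (by linarith), abs_of_nonneg (by linarith [(abs_le.1 ht).2])]
    exact key t ⟨h, (abs_le.1 ht).2⟩
  · rw [abs_of_nonneg (by linarith [(abs_le.1 ht).1]), abs_of_nonneg (by linarith),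
      add_comm (_ ^ p)]
    simpa [sub_eq_add_neg] using key (-t) ⟨by linarith, by linarith [(abs_le.1 ht).1]⟩

lemma sq_add_mul_sq_le_rpow_two_div {p : ℝ} (hp₁ : 1 ≤ p) (hp₂ : p ≤ 2) (a b : ℝ) :
    a ^ 2 + (p - 1) * b ^ 2 ≤ ((|a + b| ^ p + |a - b| ^ p) / 2) ^ (2 / p) := by
  wlog hba : |b| ≤ |a| generalizing a b
  · calc a ^ 2 + (p - 1) * b ^ 2 ≤ b ^ 2 + (p - 1) * a ^ 2 := by
          have : a ^ 2 ≤ b ^ 2 := sq_le_sq.2 (le_of_not_ge hba)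
          nlinarith
      _ ≤ ((|b + a| ^ p + |b - a| ^ p) / 2) ^ (2 / p) := this b a (by linarith)
      _ = ((|a + b| ^ p + |a - b| ^ p) / 2) ^ (2 / p) := by rw [add_comm b, abs_sub_comm]
  rcases eq_or_ne a 0 with rfl | ha
  · obtain rfl : b = 0 := abs_nonpos_iff.1 (by simpa using hba)
    simp only [ne_eq, OfNat.ofNat_ne_zero, not_false_eq_true, zero_pow, mul_zero, add_zero]
    positivity
  have hp : 0 < p := by linarith
  have ht : |b / a| ≤ 1 := by rw [abs_div]; exact div_le_one_of_le₀ hba (abs_nonneg a)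
  have hsplit : ∀ σ : ℝ, |a + σ * b| ^ p = |a| ^ p * |1 + σ * (b / a)| ^ p := by
    intro σ
    rw [← Real.mul_rpow (abs_nonneg _) (abs_nonneg _), ← abs_mul]
    congr 2
    field_simp
  have hplus := hsplit 1
  have hminus := hsplit (-1)
  simp only [one_mul, neg_one_mul, ← sub_eq_add_neg] at hplus hminus
  rw [hplus, hminus, ← mul_add, mul_div_assoc, Real.mul_rpow (by positivity) (by positivity),
    ← Real.rpow_mul (abs_nonneg a), mul_div_cancel₀ _ hp.ne', Real.rpow_two, sq_abs]
  calc a ^ 2 + (p - 1) * b ^ 2 = a ^ 2 * (1 + (p - 1) * (b / a) ^ 2) := by field_simp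
    _ ≤ _ := mul_le_mul_of_nonneg_left (one_add_mul_sq_le_rpow_two_div hp₁ hp₂ ht) (sq_nonneg a)

lemma sq_add_mul_le_mul_of_mul_eq_one {p q : ℝ} (hp : 1 ≤ p) (hpq : (q - 1) * (p - 1) = 1)
    (a b c d : ℝ) :
    (a * c + b * d) ^ 2 ≤ (a ^ 2 + (q - 1) * b ^ 2) * (c ^ 2 + (p - 1) * d ^ 2) := by
  have : (a ^ 2 + (q - 1) * b ^ 2) * (c ^ 2 + (p - 1) * d ^ 2) - (a * c + b * d) ^ 2
      = (p - 1) * (a * d - (q - 1) * b * c) ^ 2 := by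
    linear_combination (b ^ 2 * d ^ 2 + 2 * a * b * c * d - (q - 1) * b ^ 2 * c ^ 2) * hpq
  nlinarith [sq_nonneg (a * d - (q - 1) * b * c)]

/-- Two-point inequality for `q ≥ 2` (Gross), by Hölder duality from the range `1 ≤ p ≤ 2`:
pair `(a, b)` against `(c, d)` with `c ± d = Y (a ± b)`, where `Y w = w |w|^(q-2)` is the
duality map of `ℓ^q`. -/
lemma avg_abs_add_rpow_le_sq_add_mul_sq_rpow {q : ℝ} (hq : 2 ≤ q) (a b : ℝ) :
    (|a + b| ^ q + |a - b| ^ q) / 2 ≤ (a ^ 2 + (q - 1) * b ^ 2) ^ (q / 2) := by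
  have hq₁ : q - 1 ≠ 0 := by linarith
  obtain ⟨p, hp⟩ : ∃ p, (q - 1) * (p - 1) = 1 := ⟨q / (q - 1), by field_simp; ring⟩
  have hp₁ : 1 ≤ p := by nlinarith
  have hp₂ : p ≤ 2 := by nlinarith
  set Y : ℝ → ℝ := fun w => w * |w| ^ (q - 2)
  have hmul_Y : ∀ w, w * Y w = |w| ^ q := fun w => by
    rw [← mul_assoc, ← sq, ← sq_abs, ← Real.rpow_two, ← Real.rpow_add' (abs_nonneg w) (by linarith)]
    ring_nf
  have habs_Y : ∀ w, |Y w| ^ p = |w| ^ q := fun w => by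
    rw [abs_mul, abs_of_nonneg (Real.rpow_nonneg (abs_nonneg w) _),
      ← Real.rpow_one_add' (abs_nonneg w) (by linarith), ← Real.rpow_mul (abs_nonneg w)]
    congr 1
    linear_combination hp
  set c := (Y (a + b) + Y (a - b)) / 2
  set d := (Y (a + b) - Y (a - b)) / 2
  set M := (|a + b| ^ q + |a - b| ^ q) / 2
  have hpairing : a * c + b * d = M := by
    simp only [c, d, M, ← hmul_Y]
    ring
  have hdual : c ^ 2 + (p - 1) * d ^ 2 ≤ M ^ (2 / p) := by
    have := sq_add_mul_sq_le_rpow_two_div hp₁ hp₂ c d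
    rwa [show c + d = Y (a + b) by ring, show c - d = Y (a - b) by ring, habs_Y, habs_Y] at this
  have hM : 0 ≤ M := by positivity
  have hM_sq : M ^ 2 ≤ (a ^ 2 + (q - 1) * b ^ 2) * M ^ (2 / p) :=
    calc M ^ 2 = (a * c + b * d) ^ 2 := by rw [hpairing]
      _ ≤ (a ^ 2 + (q - 1) * b ^ 2) * (c ^ 2 + (p - 1) * d ^ 2) :=
        sq_add_mul_le_mul_of_mul_eq_one hp₁ hp a b c d
      _ ≤ (a ^ 2 + (q - 1) * b ^ 2) * M ^ (2 / p) :=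
        mul_le_mul_of_nonneg_left hdual (by nlinarith)
  rcases hM.eq_or_lt with hM0 | hM0
  · rw [← hM0]; exact Real.rpow_nonneg (by nlinarith) _
  have hMR : M ^ (2 / q) ≤ a ^ 2 + (q - 1) * b ^ 2 := by
    have h2q : 2 / q = 2 - 2 / p := by field_simp; linear_combination -hp
    rw [h2q, Real.rpow_sub hM0, Real.rpow_two, div_le_iff₀ (Real.rpow_pos_of_pos hM0 _)]
    exact hM_sq
  calc M = (M ^ (2 / q)) ^ (q / 2) := by
        rw [← Real.rpow_mul hM, div_mul_div_cancel₀ (by linarith), div_self two_ne_zero,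
          Real.rpow_one]
    _ ≤ (a ^ 2 + (q - 1) * b ^ 2) ^ (q / 2) := by gcongr

namespace Hypercube

variable {n : ℕ}

def boolSign (b : Bool) : ℝ := if b then 1 else -1

@[simp] lemma boolSign_true : boolSign true = 1 := rfl

@[simp] lemma boolSign_false : boolSign false = -1 := rfl

lemma walsh_eq_prod (A : Finset (Fin n)) (x : Fin n → Bool) :
    walsh A x = ∏ j ∈ A, boolSign (x j) := rfl

lemma walsh_empty (x : Fin n → Bool) : walsh ∅ x = 1 := prod_empty

lemma sum_prod_eq_prod_add_bool (F : Fin n → Bool → ℝ) :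
    ∑ x : Fin n → Bool, ∏ j, F j (x j) = ∏ j, (F j true + F j false) := by
  simp only [← Fintype.sum_bool, Fintype.prod_sum]

lemma sum_walsh_mul_walsh (A B : Finset (Fin n)) :
    ∑ x, walsh A x * walsh B x = if A = B then (2 : ℝ) ^ n else 0 := by
  have hsplit : ∀ x : Fin n → Bool, walsh A x * walsh B x =
      ∏ j, (if j ∈ A then boolSign (x j) else 1) * (if j ∈ B then boolSign (x j) else 1) := by
    intro x
    rw [prod_mul_distrib, prod_ite_mem, prod_ite_mem, Finset.univ_inter, Finset.univ_inter]
    rfl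
  have hfactor : ∀ j, (if j ∈ A then boolSign true else 1) * (if j ∈ B then boolSign true else 1)
      + (if j ∈ A then boolSign false else 1) * (if j ∈ B then boolSign false else 1)
      = if j ∈ A ↔ j ∈ B then 2 else 0 := by
    intro j
    by_cases hA : j ∈ A <;> by_cases hB : j ∈ B <;> simp [hA, hB, boolSign] <;> norm_num
  simp_rw [hsplit, sum_prod_eq_prod_add_bool
    (fun j b => (if j ∈ A then boolSign b else 1) * (if j ∈ B then boolSign b else 1)), hfactor]
  split_ifs with hAB
  · simp [hAB]
  · obtain ⟨j, hj⟩ : ∃ j, ¬(j ∈ A ↔ j ∈ B) := by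
      by_contra! h
      exact hAB (Finset.ext h)
    exact prod_eq_zero (mem_univ j) (if_neg hj)

lemma prod_one_add_mul_boolSign (ρ : ℝ) (x y : Fin n → Bool) :
    ∏ j, (1 + ρ * (boolSign (x j) * boolSign (y j))) =
      ∑ A : Finset (Fin n), ρ ^ #A * (walsh A x * walsh A y) := by
  simp_rw [add_comm (1 : ℝ), Fintype.prod_add, prod_const_one, mul_one, prod_mul_distrib,
    prod_const, walsh_eq_prod]

lemma sum_walsh_mul_walsh_apply (x y : Fin n → Bool) :
    ∑ A : Finset (Fin n), walsh A x * walsh A y = if x = y then (2 : ℝ) ^ n else 0 := by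
  have hfactor : ∀ j, 1 + boolSign (x j) * boolSign (y j) = if x j = y j then 2 else 0 := by
    intro j
    cases x j <;> cases y j <;> simp [boolSign] <;> norm_num
  have := prod_one_add_mul_boolSign 1 x y
  simp only [one_pow, one_mul] at this
  simp_rw [← this, hfactor, Fintype.prod_ite_zero, ← funext_iff, prod_const, card_univ,
    Fintype.card_fin]

lemma sum_fourierCoef_mul_walsh (f : (Fin n → Bool) → ℝ) (x : Fin n → Bool) :
    ∑ A, fourierCoef f A * walsh A x = f x := by
  simp only [fourierCoef, div_mul_eq_mul_div, ← sum_div, sum_mul, mul_assoc]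
  rw [sum_comm]
  simp_rw [← mul_sum, sum_walsh_mul_walsh_apply, mul_ite, mul_zero, sum_ite_eq', mem_univ,
    if_true]
  field_simp

lemma fourierCoef_sum_mul_walsh (c : Finset (Fin n) → ℝ) (B : Finset (Fin n)) :
    fourierCoef (fun x => ∑ A, c A * walsh A x) B = c B := by
  simp only [fourierCoef, sum_mul, mul_assoc]
  rw [sum_comm]
  simp_rw [← mul_sum, sum_walsh_mul_walsh, mul_ite, mul_zero, sum_ite_eq', mem_univ, if_true]
  field_simp

lemma sum_fourierCoef_sq (f : (Fin n → Bool) → ℝ) :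
    ∑ A, fourierCoef f A ^ 2 = (∑ x, f x ^ 2) / 2 ^ n := by
  have hcoef : ∀ A, fourierCoef f A ^ 2 = fourierCoef f A * (∑ x, f x * walsh A x) / 2 ^ n :=
    fun A => by rw [sq, fourierCoef, mul_div_assoc]
  simp_rw [hcoef, ← sum_div, mul_sum]
  rw [sum_comm]
  simp_rw [mul_left_comm _ (f _), ← mul_sum, sum_fourierCoef_mul_walsh, sq]

/-- Defined through its kernel, which factors over the coordinates; `noiseOp_eq_sum` gives the
Fourier form `∑_A ρ^|A| f̂(A) W_A`. -/
noncomputable def noiseOp (ρ : ℝ) (f : (Fin n → Bool) → ℝ) : (Fin n → Bool) → ℝ :=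
  fun x => (∑ y, f y * ∏ j, (1 + ρ * (boolSign (x j) * boolSign (y j)))) / 2 ^ n

lemma noiseOp_eq_sum (ρ : ℝ) (f : (Fin n → Bool) → ℝ) (x : Fin n → Bool) :
    noiseOp ρ f x = ∑ A, ρ ^ #A * fourierCoef f A * walsh A x := by
  simp only [noiseOp, prod_one_add_mul_boolSign, fourierCoef, mul_sum, sum_mul, sum_div]
  rw [sum_comm]
  exact sum_congr rfl fun A _ => sum_congr rfl fun y _ => by ring

lemma fourierCoef_noiseOp (ρ : ℝ) (f : (Fin n → Bool) → ℝ) (A : Finset (Fin n)) :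
    fourierCoef (noiseOp ρ f) A = ρ ^ #A * fourierCoef f A := by
  simp_rw [funext (noiseOp_eq_sum ρ f), fourierCoef_sum_mul_walsh]

lemma noiseOp_noiseOp (a b : ℝ) (f : (Fin n → Bool) → ℝ) :
    noiseOp a (noiseOp b f) = noiseOp (a * b) f := by
  ext x
  simp_rw [noiseOp_eq_sum, fourierCoef_noiseOp, mul_pow, mul_assoc]

lemma heatSemigroup_eq_noiseOp (s : ℝ) (f : (Fin n → Bool) → ℝ) :
    heatSemigroup s f = noiseOp (Real.exp (-s)) f := by
  ext x
  simp_rw [noiseOp_eq_sum, heatSemigroup, ← Real.exp_nat_mul, mul_neg, mul_comm s]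

noncomputable def moment (p : ℝ) (f : (Fin n → Bool) → ℝ) : ℝ :=
  (∑ x, |f x| ^ p) / 2 ^ n

lemma pnorm_eq_moment_rpow (p : ℝ) (f : (Fin n → Bool) → ℝ) :
    pnorm p f = moment p f ^ (1 / p) := rfl

lemma moment_nonneg (p : ℝ) (f : (Fin n → Bool) → ℝ) : 0 ≤ moment p f := by
  unfold moment; positivity

lemma pnorm_nonneg (p : ℝ) (f : (Fin n → Bool) → ℝ) : 0 ≤ pnorm p f :=
  Real.rpow_nonneg (moment_nonneg p f) _

lemma pnorm_le_pnorm_of_moment_le {m : ℕ} {p : ℝ} (hp : 0 ≤ p) {f : (Fin n → Bool) → ℝ}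
    {g : (Fin m → Bool) → ℝ} (h : moment p f ≤ moment p g) : pnorm p f ≤ pnorm p g :=
  Real.rpow_le_rpow (moment_nonneg p f) h (by positivity)

lemma moment_sq (p : ℝ) (f : (Fin n → Bool) → ℝ) :
    moment (p / 2) (fun x => f x ^ 2) = moment p f := by
  simp_rw [moment, abs_pow, ← Real.rpow_natCast, ← Real.rpow_mul (abs_nonneg _)]
  norm_num [mul_div_cancel₀]

lemma pnorm_sq {p : ℝ} (hp : p ≠ 0) (f : (Fin n → Bool) → ℝ) :
    pnorm (p / 2) (fun x => f x ^ 2) = pnorm p f ^ 2 := by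
  rw [pnorm_eq_moment_rpow, moment_sq, pnorm_eq_moment_rpow, ← Real.rpow_natCast,
    ← Real.rpow_mul (moment_nonneg p f)]
  congr 1
  field_simp
  norm_num

lemma moment_two (f : (Fin n → Bool) → ℝ) : moment 2 f = (∑ x, f x ^ 2) / 2 ^ n := by
  simp_rw [moment, Real.rpow_two, sq_abs]

lemma pnorm_two_sq (f : (Fin n → Bool) → ℝ) : pnorm 2 f ^ 2 = moment 2 f := by
  rw [pnorm_eq_moment_rpow, ← Real.rpow_natCast, ← Real.rpow_mul (moment_nonneg 2 f)]
  norm_num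

lemma pnorm_two_eq_sqrt (f : (Fin n → Bool) → ℝ) :
    pnorm 2 f = √(∑ A, fourierCoef f A ^ 2) := by
  rw [sum_fourierCoef_sq, ← moment_two, ← pnorm_two_sq, Real.sqrt_sq (pnorm_nonneg 2 f)]

lemma pnorm_add_le {p : ℝ} (hp : 1 ≤ p) (f g : (Fin n → Bool) → ℝ) :
    pnorm p (fun x => f x + g x) ≤ pnorm p f + pnorm p g := by
  simp only [pnorm]
  rw [Real.div_rpow (by positivity) (by positivity), Real.div_rpow (by positivity) (by positivity),
    Real.div_rpow (by positivity) (by positivity), ← add_div]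
  gcongr
  exact Real.Lp_add_le univ f g hp

lemma pnorm_le_pnorm_of_le {p q : ℝ} (hp : 0 < p) (hpq : p ≤ q) (f : (Fin n → Bool) → ℝ) :
    pnorm p f ≤ pnorm q f := by
  have jensen := Real.rpow_arith_mean_le_arith_mean_rpow univ (fun _ => ((2 : ℝ) ^ n)⁻¹)
    (fun x => |f x| ^ p) (fun _ _ => by positivity) (by simp) (fun _ _ => by positivity)
    ((one_le_div hp).2 hpq)
  rw [← mul_sum, ← mul_sum] at jensen
  simp only [inv_mul_eq_div, ← Real.rpow_mul (abs_nonneg _), mul_div_cancel₀ _ hp.ne'] at jensen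
  have hq : 0 < q := hp.trans_le hpq
  calc pnorm p f = (moment p f ^ (q / p)) ^ (1 / q) := by
        rw [← Real.rpow_mul (moment_nonneg p f), pnorm_eq_moment_rpow]
        congr 1
        field_simp
    _ ≤ pnorm q f := Real.rpow_le_rpow (by unfold moment; positivity) jensen (by positivity)

noncomputable def consAvg (f : (Fin (n + 1) → Bool) → ℝ) : (Fin n → Bool) → ℝ :=
  fun y => (f (Fin.cons true y) + f (Fin.cons false y)) / 2

noncomputable def consDiff (f : (Fin (n + 1) → Bool) → ℝ) : (Fin n → Bool) → ℝ :=
  fun y => (f (Fin.cons true y) - f (Fin.cons false y)) / 2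

lemma sum_cube_succ (F : (Fin (n + 1) → Bool) → ℝ) :
    ∑ x, F x = ∑ y, (F (Fin.cons true y) + F (Fin.cons false y)) := by
  rw [← (Fin.consEquiv fun _ => Bool).sum_comp, Fintype.sum_prod_type, Fintype.sum_bool,
    ← sum_add_distrib]
  rfl

lemma noiseOp_cons (ρ : ℝ) (f : (Fin (n + 1) → Bool) → ℝ) (b : Bool) (y : Fin n → Bool) :
    noiseOp ρ f (Fin.cons b y) =
      noiseOp ρ (consAvg f) y + ρ * boolSign b * noiseOp ρ (consDiff f) y := by
  simp only [noiseOp, sum_cube_succ, Fin.prod_univ_succ, Fin.cons_zero, Fin.cons_succ]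
  rw [pow_succ', ← div_div, sum_div, mul_div_assoc', ← add_div, mul_sum, ← sum_add_distrib]
  congr 1
  refine sum_congr rfl fun x _ => ?_
  cases b <;> simp only [consAvg, consDiff, boolSign_true, boolSign_false] <;> ring

lemma pnorm_two_sq_eq_cons (f : (Fin (n + 1) → Bool) → ℝ) :
    pnorm 2 f ^ 2 = pnorm 2 (consAvg f) ^ 2 + pnorm 2 (consDiff f) ^ 2 := by
  simp only [pnorm_two_sq, moment_two, sum_cube_succ]
  rw [pow_succ', ← div_div, sum_div, ← add_div, ← sum_add_distrib]
  congr 1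
  refine sum_congr rfl fun x _ => ?_
  simp only [consAvg, consDiff]
  ring

lemma moment_noiseOp_le_moment_cons {q ρ : ℝ} (hq : 2 ≤ q) (hρ : (q - 1) * ρ ^ 2 ≤ 1)
    (f : (Fin (n + 1) → Bool) → ℝ) :
    moment q (noiseOp ρ f) ≤ moment (q / 2)
      (fun y => noiseOp ρ (consAvg f) y ^ 2 + noiseOp ρ (consDiff f) y ^ 2) := by
  simp only [moment, sum_cube_succ, noiseOp_cons]
  rw [pow_succ', ← div_div, sum_div]
  gcongr with y
  set a := noiseOp ρ (consAvg f) y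
  set b := noiseOp ρ (consDiff f) y
  rw [boolSign_true, boolSign_false, mul_one, mul_neg_one, neg_mul, ← sub_eq_add_neg,
    abs_of_nonneg (add_nonneg (sq_nonneg a) (sq_nonneg b))]
  refine (avg_abs_add_rpow_le_sq_add_mul_sq_rpow hq a (ρ * b)).trans
    (Real.rpow_le_rpow (add_nonneg (sq_nonneg a) (mul_nonneg (by linarith) (sq_nonneg _))) ?_
      (by linarith))
  nlinarith [mul_le_mul_of_nonneg_right hρ (sq_nonneg b)]

theorem pnorm_noiseOp_le_pnorm_two {q ρ : ℝ} (hq : 2 ≤ q) (hρ : (q - 1) * ρ ^ 2 ≤ 1)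
    (f : (Fin n → Bool) → ℝ) : pnorm q (noiseOp ρ f) ≤ pnorm 2 f := by
  induction n with
  | zero =>
    have hnoise : noiseOp ρ f = f := by
      ext x
      simp [noiseOp, Subsingleton.elim _ x]
    have hpnorm : ∀ p ≠ 0, pnorm p f = |f default| := fun p hp => by
      simp [pnorm, ← Real.rpow_mul, hp, Unique.eq_default]
    rw [hnoise, hpnorm q (by linarith), hpnorm 2 two_ne_zero]
  | succ n ih =>
    have hq0 : q ≠ 0 := by linarith
    rw [← pow_le_pow_iff_left₀ (pnorm_nonneg _ _) (pnorm_nonneg _ _) two_ne_zero,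
      ← pnorm_sq hq0, pnorm_two_sq_eq_cons]
    calc pnorm (q / 2) (fun x => noiseOp ρ f x ^ 2)
        ≤ pnorm (q / 2) (fun y => noiseOp ρ (consAvg f) y ^ 2 + noiseOp ρ (consDiff f) y ^ 2) :=
          pnorm_le_pnorm_of_moment_le (by linarith)
            (by rw [moment_sq]; exact moment_noiseOp_le_moment_cons hq hρ f)
      _ ≤ pnorm (q / 2) (fun y => noiseOp ρ (consAvg f) y ^ 2)
          + pnorm (q / 2) (fun y => noiseOp ρ (consDiff f) y ^ 2) :=
          pnorm_add_le (by linarith) _ _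
      _ ≤ pnorm 2 (consAvg f) ^ 2 + pnorm 2 (consDiff f) ^ 2 := by
          rw [pnorm_sq hq0, pnorm_sq hq0]
          exact add_le_add (pow_le_pow_left₀ (pnorm_nonneg _ _) (ih _) 2)
            (pow_le_pow_left₀ (pnorm_nonneg _ _) (ih _) 2)

lemma fourierCoef_sub_const (f : (Fin n → Bool) → ℝ) (c : ℝ) (A : Finset (Fin n)) :
    fourierCoef (fun x => f x - c) A = fourierCoef f A - if A = ∅ then c else 0 := by
  have hconst : ∑ x, c * walsh A x = c * (if A = ∅ then (2 : ℝ) ^ n else 0) := by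
    simpa [walsh_empty, ← mul_sum] using congrArg (c * ·) (sum_walsh_mul_walsh A ∅)
  simp only [fourierCoef, sub_mul, sum_sub_distrib, hconst, sub_div]
  split_ifs
  · field_simp
  · simp

lemma pnorm_two_noiseOp_le {ρ : ℝ} (hρ : |ρ| ≤ 1) {f : (Fin n → Bool) → ℝ}
    (hf : fourierCoef f ∅ = 0) : pnorm 2 (noiseOp ρ f) ≤ |ρ| * pnorm 2 f := by
  rw [pnorm_two_eq_sqrt, pnorm_two_eq_sqrt, ← Real.sqrt_sq (abs_nonneg ρ), ← Real.sqrt_mul',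
    mul_sum]
  swap; positivity
  refine Real.sqrt_le_sqrt (sum_le_sum fun A _ => ?_)
  rw [fourierCoef_noiseOp, mul_pow, pow_right_comm, sq_abs]
  rcases A.eq_empty_or_nonempty with rfl | hA
  · simp [hf]
  exact mul_le_mul_of_nonneg_right (pow_le_of_le_one (sq_nonneg ρ)
    (sq_le_one_iff_abs_le_one ρ |>.2 hρ) (card_ne_zero.2 hA)) (sq_nonneg _)

lemma pnorm_two_sub_fourierCoef_empty_le (f : (Fin n → Bool) → ℝ) :
    pnorm 2 (fun x => f x - fourierCoef f ∅) ≤ pnorm 2 f := by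
  rw [pnorm_two_eq_sqrt, pnorm_two_eq_sqrt]
  refine Real.sqrt_le_sqrt (sum_le_sum fun A _ => ?_)
  rw [fourierCoef_sub_const]
  split_ifs with hA
  · simp [hA, sq_nonneg]
  · simp

end Hypercube

open Hypercube

/-- **Inequality (3.14)**: there is a universal `C > 0` such that for every `p ∈ [2,∞)` and
every `s ∈ (0,∞)` with `e^s > √p`, for every `n ∈ ℕ` and every `h : {-1,1}^n → ℝ`,
`‖e^{-sΔ_{[n]}}(h - Rad_0 h)‖_p ≤ C √p/(e^s - √p) ‖h‖_p`. -/
theorem heatSemigroup_meanZero_opNorm :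
    ∃ C : ℝ, 0 < C ∧ ∀ p : ℝ, 2 ≤ p → ∀ s : ℝ, 0 < s → Real.sqrt p < Real.exp s →
      ∀ n : ℕ, ∀ h : (Fin n → Bool) → ℝ,
      pnorm p (heatSemigroup s (fun ε => h ε - fourierCoef h (∅ : Finset (Fin n)))) ≤
        C * Real.sqrt p / (Real.exp s - Real.sqrt p) * pnorm p h := by
  refine ⟨1, one_pos, fun p hp s _ hsp n h => ?_⟩
  set g := fun ε => h ε - fourierCoef h ∅
  have hp₁ : 0 < p - 1 := by linarith
  have hρ : (p - 1) * (√(p - 1))⁻¹ ^ 2 ≤ 1 := by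
    rw [inv_pow, Real.sq_sqrt hp₁.le, mul_inv_cancel₀ hp₁.ne']
  have hr : |√(p - 1) / Real.exp s| ≤ 1 := by
    rw [abs_of_nonneg (by positivity), div_le_one (Real.exp_pos s)]
    exact (Real.sqrt_le_sqrt (by linarith)).trans hsp.le
  have hheat : heatSemigroup s g = noiseOp (√(p - 1))⁻¹ (noiseOp (√(p - 1) / Real.exp s) g) := by
    rw [heatSemigroup_eq_noiseOp, noiseOp_noiseOp, div_eq_mul_inv, ← Real.exp_neg,
      inv_mul_cancel_left₀ (by positivity)]
  calc pnorm p (heatSemigroup s g)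
      ≤ pnorm 2 (noiseOp (√(p - 1) / Real.exp s) g) := hheat ▸ pnorm_noiseOp_le_pnorm_two hp hρ _
    _ ≤ |√(p - 1) / Real.exp s| * pnorm 2 g :=
        pnorm_two_noiseOp_le hr (by simp [g, fourierCoef_sub_const])
    _ ≤ √p / Real.exp s * pnorm p h := by
        rw [abs_of_nonneg (by positivity)]
        exact mul_le_mul (by gcongr; linarith)
          ((pnorm_two_sub_fourierCoef_empty_le h).trans (pnorm_le_pnorm_of_le two_pos hp h))
          (pnorm_nonneg 2 g) (by positivity)
    _ ≤ 1 * √p / (Real.exp s - √p) * pnorm p h := by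
        rw [one_mul]
        exact mul_le_mul_of_nonneg_right (div_le_div_of_nonneg_left (Real.sqrt_nonneg p)
          (by linarith) (by linarith [Real.sqrt_nonneg p])) (pnorm_nonneg p h)
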